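/- arXiv:1801.02772 — 4 statements merged into one kernel-verified Lean document; each statement's English description precedes it below -/
import Mathlib

section
/- Let k ≥ 3, let k' ≥ 0 and i ≥ 1 be integers with k' + i + 1 ≤ k (in the paper k' = k - r - 2 and 1 ≤ i ≤ r ≤ k - 2). Then the sum over all triples of nonnegative integers (e1, e2, e3) with e1 + e2 + e3 = k' of (-1)^{i+e1} * C(k, i+e1) equals (k'+i+1) * ((-1)^{k'+i} * C(k-1, k'+i) - (-1)^{i-1} * C(k-1, i-1)) + k * ((-1)^{k'+i-1} * C(k-2, k'+i-1) - (-1)^{i-2} * C(k-2, i-2)). -/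
/-- Signed binomial coefficient `(-1)^m * C(n, m)`, interpreted as `0` when `m < 0`
(following the convention `C(n, m) = 0` for `m < 0` or `m > n`). -/
def sbinom (n : ℕ) (m : ℤ) : ℤ :=
  if 0 ≤ m then (-1) ^ m.toNat * (n.choose m.toNat : ℤ) else 0

/-! Grouping the triples by `e₁`, the sum becomes `∑_{j=i}^{N} (N + 1 - j) (-1)^j C(k, j)` with
`N = k' + i`. Split the weight into `N + 1` and `-j`: partial alternating sums of `C(k, ·)`
telescope to `(-1)^m C(k - 1, m)` by Pascal's rule, and `j C(k, j) = k C(k - 1, j - 1)` turns the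
second sum into a partial alternating sum of `C(k - 1, ·)`. -/

open Finset

lemma sbinom_natCast (n m : ℕ) : sbinom n m = (-1) ^ m * (n.choose m : ℤ) := by
  simp [sbinom]

lemma card_filter_triple_fst_eq (m a : ℕ) :
    #{e ∈ (range (m + 1) ×ˢ range (m + 1) ×ˢ range (m + 1)).filter
        (fun e => e.1 + e.2.1 + e.2.2 = m) | e.1 = a} = m + 1 - a := by
  have hfiber : {e ∈ (range (m + 1) ×ˢ range (m + 1) ×ˢ range (m + 1)).filter
        (fun e => e.1 + e.2.1 + e.2.2 = m) | e.1 = a}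
      = (range (m + 1 - a)).image fun b => (a, b, m - a - b) := by
    ext ⟨x, y, z⟩
    simp only [mem_filter, mem_product, mem_range, mem_image, Prod.mk.injEq]
    constructor
    · rintro ⟨⟨-, hsum⟩, ha⟩
      exact ⟨y, by omega, by omega, rfl, by omega⟩
    · rintro ⟨b, hb, rfl, rfl, rfl⟩
      omega
  rw [hfiber, card_image_of_injective _ fun b c h => (Prod.mk.inj (Prod.mk.inj h).2).1,
    card_range]

lemma sum_filter_triple_fst_eq {M : Type*} [AddCommMonoid M] (m : ℕ) (g : ℕ → M) :
    ∑ e ∈ (range (m + 1) ×ˢ range (m + 1) ×ˢ range (m + 1)).filter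
        (fun e => e.1 + e.2.1 + e.2.2 = m), g e.1
      = ∑ a ∈ range (m + 1), (m + 1 - a) • g a := by
  rw [← sum_fiberwise_of_maps_to (t := range (m + 1)) (g := Prod.fst)
    (by simp only [mem_filter, mem_product]; tauto)]
  refine sum_congr rfl fun a _ => ?_
  rw [sum_congr rfl fun e he => congrArg g (mem_filter.mp he).2, sum_const,
    card_filter_triple_fst_eq]

lemma sum_range_alternating_choose (n m : ℕ) :
    ∑ j ∈ range m, (-1 : ℤ) ^ j * ((n + 1).choose j : ℤ) = sbinom n ((m : ℤ) - 1) := by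
  rcases m with _ | m
  · simp [sbinom]
  · simpa [sbinom_natCast] using Int.alternating_sum_range_choose_eq_choose (n := n) (m := m)

lemma sum_range_mul_alternating_choose (n m : ℕ) :
    ∑ j ∈ range m, (j : ℤ) * ((-1) ^ j * ((n + 2).choose j : ℤ))
      = -((n : ℤ) + 2) * sbinom n ((m : ℤ) - 2) := by
  rcases m with _ | m
  · simp [sbinom]
  have hterm (j : ℕ) : ((j + 1 : ℕ) : ℤ) * ((-1) ^ (j + 1) * ((n + 2).choose (j + 1) : ℤ))
      = -((n : ℤ) + 2) * ((-1) ^ j * ((n + 1).choose j : ℤ)) := by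
    have h : ((n : ℤ) + 2) * ((n + 1).choose j : ℤ) = ((n + 2).choose (j + 1) : ℤ) * (j + 1) := by
      exact_mod_cast Nat.add_one_mul_choose_eq (n + 1) j
    push_cast
    linear_combination (-1 : ℤ) ^ j * h
  rw [sum_range_succ', sum_congr rfl fun j _ => hterm j, ← mul_sum, sum_range_alternating_choose]
  push_cast
  ring_nf

lemma sum_range_tsub_nsmul_eq_sub_sum_Ico {R : Type*} [CommRing R] (f : ℕ → R) (i m : ℕ) :
    ∑ a ∈ range (m + 1), (m + 1 - a) • f (i + a)
      = ((i + m + 1 : ℕ) : R) * ∑ j ∈ Ico i (i + m + 1), f j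
        - ∑ j ∈ Ico i (i + m + 1), (j : R) * f j := by
  rw [mul_sum, ← sum_sub_distrib, sum_Ico_eq_sum_range, show i + m + 1 - i = m + 1 by omega]
  refine sum_congr rfl fun a ha => ?_
  rw [nsmul_eq_mul, Nat.cast_sub (mem_range.mp ha).le, ← sub_mul]
  push_cast
  ring

theorem sum_signed_binom_triple_general (k k' i : ℕ) (hk : 3 ≤ k) :
    (∑ e ∈ (Finset.range (k' + 1) ×ˢ Finset.range (k' + 1) ×ˢ Finset.range (k' + 1)).filter
        (fun e => e.1 + e.2.1 + e.2.2 = k'),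
      (-1 : ℤ) ^ (i + e.1) * (k.choose (i + e.1) : ℤ))
      = ((k' : ℤ) + i + 1) * (sbinom (k - 1) ((k' : ℤ) + i) - sbinom (k - 1) ((i : ℤ) - 1))
        + (k : ℤ) * (sbinom (k - 2) ((k' : ℤ) + i - 1) - sbinom (k - 2) ((i : ℤ) - 2)) := by
  obtain ⟨n, rfl⟩ : ∃ n, k = n + 2 := ⟨k - 2, by omega⟩
  rw [sum_filter_triple_fst_eq k' fun a => (-1 : ℤ) ^ (i + a) * ((n + 2).choose (i + a) : ℤ),
    sum_range_tsub_nsmul_eq_sub_sum_Ico (fun j => (-1 : ℤ) ^ j * ((n + 2).choose j : ℤ)),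
    sum_Ico_eq_sub _ (by omega), sum_Ico_eq_sub _ (by omega), sum_range_alternating_choose (n + 1),
    sum_range_alternating_choose (n + 1), sum_range_mul_alternating_choose,
    sum_range_mul_alternating_choose, Nat.add_sub_cancel, show n + 2 - 1 = n + 1 from rfl]
  push_cast
  ring_nf

theorem sum_signed_binom_triple (k k' i : ℕ) (hk : 3 ≤ k) (hi : 1 ≤ i)
    (h : k' + i + 1 ≤ k) :
    (∑ e ∈ (Finset.range (k' + 1) ×ˢ Finset.range (k' + 1) ×ˢ Finset.range (k' + 1)).filter
        (fun e => e.1 + e.2.1 + e.2.2 = k'),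
      (-1 : ℤ) ^ (i + e.1) * (k.choose (i + e.1) : ℤ))
      = ((k' : ℤ) + i + 1) * (sbinom (k - 1) ((k' : ℤ) + i) - sbinom (k - 1) ((i : ℤ) - 1))
        + (k : ℤ) * (sbinom (k - 2) ((k' : ℤ) + i - 1) - sbinom (k - 2) ((i : ℤ) - 2)) :=
  sum_signed_binom_triple_general k k' i hk
end

section
/- Let p be a prime, r ≥ 1, and let k_1, ..., k_r be positive integers with total sum K. Then, in F_p, the sum over all r-tuples p > m_1 > m_2 > ... > m_r ≥ 1 of the product of m_s^{-k_s} for s = 1, ..., r equals (-1)^K times the sum over all r-tuples p > m_1 > ... > m_r ≥ 1 of the product m_1^{-k_r} * m_2^{-k_{r-1}} * ... * m_r^{-k_1} (i.e., the same sum with the exponent sequence reversed). -/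
/-!
Substituting `m ↦ p - m` in every index and reversing their order maps the set of strictly
decreasing tuples `p > m₀ > ⋯ > m_{r-1} ≥ 1` onto itself, and since `(p - m)⁻¹ = -m⁻¹` in `𝔽_p`
it turns the summand for the exponents `k` into `(-1)^(∑ k)` times the summand for the reversed
exponents.
-/

open Finset

def mzvIndices (r p : ℕ) : Finset (Fin r → Fin p) :=
  univ.filter fun m => (∀ s t : Fin r, s < t → (m t : ℕ) < (m s : ℕ)) ∧ ∀ s, 1 ≤ (m s : ℕ)

def finiteMZV {r : ℕ} (p : ℕ) (k : Fin r → ℕ) : ZMod p :=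
  ∑ m ∈ mzvIndices r p, ∏ s, (((m s : ℕ) : ZMod p))⁻¹ ^ k s

theorem Fin.natCast_val_neg {n : ℕ} (i : Fin n) :
    (((-i : Fin n) : ℕ) : ZMod n) = -((i : ℕ) : ZMod n) := by
  rw [Fin.val_neg', ZMod.natCast_mod, Nat.cast_sub i.is_lt.le, ZMod.natCast_self, zero_sub]

@[to_additive]
theorem Fin.prod_univ_rev {M : Type*} [CommMonoid M] {n : ℕ} (f : Fin n → M) :
    ∏ i : Fin n, f i.rev = ∏ i, f i :=
  Equiv.prod_comp Fin.revPerm f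

/-- The substitution `(m₀, …, m_{r-1}) ↦ (p - m_{r-1}, …, p - m₀)`. -/
def mzvReflect {r p : ℕ} (m : Fin r → Fin p) : Fin r → Fin p := fun s => -m s.rev

@[simp]
theorem mzvReflect_apply {r p : ℕ} (m : Fin r → Fin p) (s : Fin r) : mzvReflect m s = -m s.rev :=
  rfl

theorem mzvReflect_mzvReflect {r p : ℕ} [NeZero p] (m : Fin r → Fin p) :
    mzvReflect (mzvReflect m) = m := by
  funext s; simp

theorem mzvReflect_mem_mzvIndices {r p : ℕ} {m : Fin r → Fin p} (hm : m ∈ mzvIndices r p) :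
    mzvReflect m ∈ mzvIndices r p := by
  simp only [mzvIndices, mem_filter, mem_univ, true_and, mzvReflect_apply, Fin.val_neg'] at hm ⊢
  obtain ⟨hanti, hpos⟩ := hm
  have hval : ∀ s, (p - (m s : ℕ)) % p = p - m s := fun s =>
    Nat.mod_eq_of_lt (by have := hpos s; omega)
  refine ⟨fun s t hst => ?_, fun s => ?_⟩
  · have := hanti _ _ (Fin.rev_lt_rev.mpr hst)
    have := (m t.rev).is_lt
    rw [hval, hval]; omega
  · have := (m s.rev).is_lt
    rw [hval]; omega

theorem prod_inv_pow_eq_neg_one_pow_mul_mzvReflect {r p : ℕ} [Fact p.Prime] (k : Fin r → ℕ)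
    (m : Fin r → Fin p) :
    ∏ s, (((m s : ℕ) : ZMod p))⁻¹ ^ k s
      = (-1) ^ (∑ s, k s) * ∏ s, (((mzvReflect m s : ℕ) : ZMod p))⁻¹ ^ k s.rev := by
  simp only [mzvReflect_apply, Fin.natCast_val_neg, inv_neg, neg_pow (_ : ZMod p)⁻¹,
    prod_mul_distrib, prod_pow_eq_pow_sum]
  rw [Fin.sum_univ_rev, Fin.prod_univ_rev fun s => ((m s : ℕ) : ZMod p)⁻¹ ^ k s,
    ← mul_assoc, ← mul_pow, neg_one_mul, neg_neg, one_pow, one_mul]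

theorem finiteMZV_rev {r p : ℕ} [Fact p.Prime] (k : Fin r → ℕ) :
    finiteMZV p k = (-1) ^ (∑ s, k s) * finiteMZV p (k ∘ Fin.rev) := by
  rw [finiteMZV, finiteMZV, mul_sum]
  exact sum_nbij' mzvReflect mzvReflect (fun _ => mzvReflect_mem_mzvIndices)
    (fun _ => mzvReflect_mem_mzvIndices) (fun m _ => mzvReflect_mzvReflect m)
    (fun m _ => mzvReflect_mzvReflect m) fun m _ => prod_inv_pow_eq_neg_one_pow_mul_mzvReflect k m

theorem finite_mzv_reversal_general (p r : ℕ) (hp : p.Prime)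
    (k : Fin r → ℕ) :
    (∑ m ∈ Finset.univ.filter
        (fun m : Fin r → Fin p =>
          (∀ s t : Fin r, s < t → (m t : ℕ) < (m s : ℕ)) ∧ ∀ s, 1 ≤ (m s : ℕ)),
      ∏ s, (((m s : ℕ) : ZMod p))⁻¹ ^ (k s))
      = (-1 : ZMod p) ^ (∑ s, k s) *
        ∑ m ∈ Finset.univ.filter
            (fun m : Fin r → Fin p =>
              (∀ s t : Fin r, s < t → (m t : ℕ) < (m s : ℕ)) ∧ ∀ s, 1 ≤ (m s : ℕ)),
          ∏ s, (((m s : ℕ) : ZMod p))⁻¹ ^ (k s.rev) :=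
  haveI : Fact p.Prime := ⟨hp⟩
  finiteMZV_rev k

theorem finite_mzv_reversal (p r : ℕ) (hp : p.Prime) (hr : 1 ≤ r)
    (k : Fin r → ℕ) (hk : ∀ s, 1 ≤ k s) :
    (∑ m ∈ Finset.univ.filter
        (fun m : Fin r → Fin p =>
          (∀ s t : Fin r, s < t → (m t : ℕ) < (m s : ℕ)) ∧ ∀ s, 1 ≤ (m s : ℕ)),
      ∏ s, (((m s : ℕ) : ZMod p))⁻¹ ^ (k s))
      = (-1 : ZMod p) ^ (∑ s, k s) *
        ∑ m ∈ Finset.univ.filter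
            (fun m : Fin r → Fin p =>
              (∀ s t : Fin r, s < t → (m t : ℕ) < (m s : ℕ)) ∧ ∀ s, 1 ≤ (m s : ℕ)),
          ∏ s, (((m s : ℕ) : ZMod p))⁻¹ ^ (k s.rev) :=
  finite_mzv_reversal_general p r hp k
end

section
/- Let p be a prime, r ≥ 1, and let k_1, ..., k_r be positive integers all satisfying k_s ≤ p - 2 with k_1 + ... + k_r ≤ p - 2. Then the sum over all permutations σ of {1, ..., r} of the mod-p harmonic sum ∑_{p > m_1 > ... > m_r ≥ 1} ∏_s m_s^{-k_{σ(s)}} equals 0 in F_p. -/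
/-!
After symmetrization, the sum over pairs (σ, strictly decreasing m) becomes, by sorting, the sum
over all injective tuples `N : Fin r ↪ Fin p` of `∏ s, N s ^ (-k s)`. Dropping the injectivity
constraint on the first coordinate writes such a sum as the power sum `∑ a, a ^ (-k 0)` times an
injective sum of length `r - 1`, minus the `r - 1` injective sums of length `r - 1` in which
`k 0` has been merged into one of the other exponents. The total weight stays `≤ p - 2`, so every
power sum that appears vanishes in `𝔽_p`, and induction on `r` kills the whole sum.
-/

open Finset

theorem ZMod.sum_inv_natCast_pow_eq_zero {p : ℕ} [Fact p.Prime] {K : ℕ} (hK : K < p - 1) :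
    ∑ m : Fin p, ((m : ℕ) : ZMod p)⁻¹ ^ K = 0 := by
  have finEquiv_apply (m : Fin p) : ZMod.finEquiv p m = ((m : ℕ) : ZMod p) := by
    obtain ⟨n, rfl⟩ := Nat.exists_eq_succ_of_ne_zero (NeZero.ne p)
    exact (Fin.cast_val_eq_self m).symm
  calc ∑ m : Fin p, ((m : ℕ) : ZMod p)⁻¹ ^ K
      = ∑ a : ZMod p, a⁻¹ ^ K :=
        Fintype.sum_equiv (ZMod.finEquiv p).toEquiv _ _ fun m => by simp [finEquiv_apply]
    _ = ∑ a : ZMod p, a ^ K := Fintype.sum_equiv (Equiv.inv _) _ _ fun a => by simp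
    _ = 0 := FiniteField.sum_pow_lt_card_sub_one _ K (by rwa [ZMod.card])

section Embeddings

variable {α R : Type*} [Fintype α] [DecidableEq α] [CommRing R]

theorem sum_subtype_notMem_range {r : ℕ} (e : Fin r ↪ α) (g : α → R) :
    ∑ i : {i // i ∉ Set.range e}, g i = ∑ i, g i - ∑ j, g (e j) := by
  rw [eq_sub_iff_add_eq, ← sum_map univ e g, ← sum_compl_add_sum (univ.map e)]
  congr 1
  exact (sum_subtype _ (by simp) g).symm

theorem prod_pow_add_pi_single (f : α → R) (k : α → ℕ) (j : α) (K : ℕ) :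
    ∏ s, f s ^ (k s + (Pi.single j K : α → ℕ) s) = f j ^ K * ∏ s, f s ^ k s := by
  simp only [pow_add, prod_mul_distrib, mul_comm (∏ s, f s ^ k s)]
  congr 1
  rw [Fintype.prod_eq_single j fun s hs => by simp [hs], Pi.single_eq_same]

theorem sum_embedding_succ_prod_pow {r : ℕ} (x : α → R) (k : Fin (r + 1) → ℕ) :
    ∑ N : Fin (r + 1) ↪ α, ∏ s, x (N s) ^ k s =
      (∑ a, x a ^ k 0) * ∑ e : Fin r ↪ α, ∏ s, x (e s) ^ Fin.tail k s -
        ∑ j, ∑ e : Fin r ↪ α,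
          ∏ s, x (e s) ^ (Fin.tail k s + (Pi.single j (k 0) : Fin r → ℕ) s) := by
  calc ∑ N : Fin (r + 1) ↪ α, ∏ s, x (N s) ^ k s
      = ∑ e : Fin r ↪ α, (∑ a, x a ^ k 0 - ∑ j, x (e j) ^ k 0) * ∏ s, x (e s) ^ k s.succ := by
        rw [← (Equiv.embeddingFinSucc r α).symm.sum_comp, Fintype.sum_sigma]
        refine Fintype.sum_congr _ _ fun e => ?_
        rw [← sum_subtype_notMem_range, sum_mul]
        simp [Fin.prod_univ_succ]
    _ = _ := by
        simp only [sub_mul, sum_sub_distrib, mul_sum, sum_mul, prod_pow_add_pi_single, Fin.tail]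
        congr 1
        exact sum_comm

theorem sum_embedding_prod_pow_eq_zero {x : α → R} {B : ℕ} (hx : ∀ K ≤ B, ∑ a, x a ^ K = 0)
    {r : ℕ} (k : Fin (r + 1) → ℕ) (hk : ∑ s, k s ≤ B) :
    ∑ N : Fin (r + 1) ↪ α, ∏ s, x (N s) ^ k s = 0 := by
  induction r with
  | zero => rw [sum_embedding_succ_prod_pow, hx (k 0) (by simpa using hk)]; simp
  | succ r ih =>
    rw [sum_embedding_succ_prod_pow, hx (k 0) ((single_le_sum (by simp) (mem_univ 0)).trans hk),
      zero_mul, zero_sub, neg_eq_zero]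
    refine sum_eq_zero fun j _ => ih _ ?_
    rw [Fin.sum_univ_succ] at hk
    simp only [sum_add_distrib, sum_pi_single', if_pos (mem_univ j), Fin.tail]
    omega

end Embeddings

theorem sum_perm_sum_strictAnti_comp_symm {α M : Type*} {r : ℕ} [LinearOrder α] [Fintype α]
    [AddCommMonoid M] [DecidablePred (StrictAnti : (Fin r → α) → Prop)] (F : (Fin r → α) → M) :
    ∑ σ : Equiv.Perm (Fin r), ∑ m ∈ univ.filter StrictAnti, F (m ∘ σ.symm) =
      ∑ N : Fin r ↪ α, F N := by
  rw [← sum_product']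
  refine sum_bij (fun σm hσm => ⟨σm.2 ∘ σm.1.symm, ?_⟩) (fun _ _ => mem_univ _) ?_ ?_
    fun _ _ => rfl
  · simp only [mem_product, mem_filter] at hσm
    exact hσm.2.2.injective.comp σm.1.symm.injective
  · rintro ⟨σ, m⟩ hσm ⟨τ, n⟩ hτn h
    simp only [mem_product, mem_filter, Function.Embedding.mk.injEq] at hσm hτn h
    have hmn : m = n := by
      rw [← hσm.2.2.range_inj hτn.2.2, ← σ.symm.surjective.range_comp, h,
        τ.symm.surjective.range_comp]
    subst hmn
    rw [Equiv.symm_bijective.injective (Equiv.ext fun s => hσm.2.2.injective (congrFun h s))]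
  · intro N _
    let σ := Tuple.sort (OrderDual.toDual ∘ N)
    have hanti : StrictAnti (N ∘ σ) :=
      (Tuple.monotone_sort (OrderDual.toDual ∘ N)).dual_right.strictAnti_of_injective
        (N.injective.comp σ.injective)
    exact ⟨(σ, N ∘ σ), by simp [hanti], by ext; simp⟩

theorem symmetric_sum_vanishing_general (p r : ℕ) (hp : p.Prime) (hr : 1 ≤ r)
    (k : Fin r → ℕ) (hk : ∀ s, 1 ≤ k s)
    (hsum : ∑ s, k s ≤ p - 2) :
    (∑ σ : Equiv.Perm (Fin r),
      ∑ m ∈ Finset.univ.filter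
          (fun m : Fin r → Fin p =>
            (∀ s t : Fin r, s < t → (m t : ℕ) < (m s : ℕ)) ∧ ∀ s, 1 ≤ (m s : ℕ)),
        ∏ s, (((m s : ℕ) : ZMod p))⁻¹ ^ (k (σ s))) = 0 := by
  classical
  have : Fact p.Prime := ⟨hp⟩
  obtain ⟨r, rfl⟩ := Nat.exists_eq_add_of_le' hr
  calc _ = ∑ σ : Equiv.Perm (Fin (r + 1)),
          ∑ m ∈ (univ.filter StrictAnti : Finset (Fin (r + 1) → Fin p)),
            ∏ s, (((m (σ.symm s) : ℕ) : ZMod p))⁻¹ ^ k s := by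
        refine sum_congr rfl fun σ _ => ?_
        rw [← filter_filter, sum_filter_of_ne ?_]
        · rw [filter_congr fun m _ => Iff.rfl]
          refine sum_congr rfl fun m _ => ?_
          rw [← Equiv.prod_comp σ fun s => (((m (σ.symm s) : ℕ) : ZMod p))⁻¹ ^ k s]
          simp only [Equiv.symm_apply_apply]
        -- `((0 : ℕ) : ZMod p)⁻¹ = 0` and every `k s ≥ 1`, so the condition `1 ≤ m s` can be dropped.
        · intro m _ hm s
          by_contra! hms
          refine hm (prod_eq_zero (mem_univ s) ?_)
          rw [Nat.lt_one_iff.mp hms, Nat.cast_zero, inv_zero,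
            zero_pow (Nat.one_le_iff_ne_zero.mp (hk (σ s)))]
    _ = ∑ N : Fin (r + 1) ↪ Fin p, ∏ s, (((N s : ℕ) : ZMod p))⁻¹ ^ k s :=
        sum_perm_sum_strictAnti_comp_symm fun N : Fin (r + 1) → Fin p =>
          ∏ s, (((N s : ℕ) : ZMod p))⁻¹ ^ k s
    _ = 0 := sum_embedding_prod_pow_eq_zero (x := fun m : Fin p => ((m : ℕ) : ZMod p)⁻¹)
        (fun _ hK => ZMod.sum_inv_natCast_pow_eq_zero (by have := hp.two_le; omega)) k hsum

theorem symmetric_sum_vanishing (p r : ℕ) (hp : p.Prime) (hr : 1 ≤ r)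
    (k : Fin r → ℕ) (hk : ∀ s, 1 ≤ k s) (hk2 : ∀ s, k s ≤ p - 2)
    (hsum : ∑ s, k s ≤ p - 2) :
    (∑ σ : Equiv.Perm (Fin r),
      ∑ m ∈ Finset.univ.filter
          (fun m : Fin r → Fin p =>
            (∀ s t : Fin r, s < t → (m t : ℕ) < (m s : ℕ)) ∧ ∀ s, 1 ≤ (m s : ℕ)),
        ∏ s, (((m s : ℕ) : ZMod p))⁻¹ ^ (k (σ s))) = 0 :=
  symmetric_sum_vanishing_general p r hp hr k hk hsum
end

section
/- Let p be a prime and let k, r be positive integers with kr ≤ p - 2. Then the nested sum over p > m_1 > m_2 > ... > m_r ≥ 1 of ∏_{s=1}^r m_s^{-k}, computed in F_p, equals 0. -/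
/-!
The sum is the elementary symmetric polynomial `e_r` evaluated at the `x_i = i⁻¹ ^ k`,
`i ∈ 𝔽_p`. Its `j`-th power sums are `∑_{a ∈ 𝔽_p} a ^ (-kj)`, which vanish for
`0 < kj < p - 1`, so Newton's identity `r e_r = ± ∑_{a + b = r, b > 0} ± e_a p_b` gives
`r e_r = 0`, and `r` is a unit in `𝔽_p`.
-/

open Finset MvPolynomial

theorem ZMod.sum_natCast_fin {M : Type*} [AddCommMonoid M] (n : ℕ) [NeZero n]
    (f : ZMod n → M) : ∑ i : Fin n, f (i : ℕ) = ∑ a : ZMod n, f a := by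
  refine Fintype.sum_equiv (ZMod.finEquiv n).toEquiv _ _ fun i => ?_
  obtain ⟨n, rfl⟩ := Nat.exists_eq_succ_of_ne_zero (NeZero.ne n)
  exact congrArg f (Fin.cast_val_eq_self i)

theorem FiniteField.sum_inv_pow_lt_card_sub_one {K : Type*} [Field K] [Fintype K] (i : ℕ)
    (h : i < Fintype.card K - 1) : ∑ x : K, x⁻¹ ^ i = 0 :=
  (Fintype.sum_equiv (Equiv.inv K) _ _ fun _ => rfl).trans (sum_pow_lt_card_sub_one K i h)

theorem MvPolynomial.eval_esymm_eq_zero_of_eval_psum_eq_zero {σ R : Type*} [Fintype σ]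
    [CommRing R] [NoZeroDivisors R] (x : σ → R) {n : ℕ} (hn : (n : R) ≠ 0)
    (h : ∀ j, 0 < j → j ≤ n → eval x (psum σ R j) = 0) : eval x (esymm σ R n) = 0 := by
  have newton := congrArg (eval x) (mul_esymm_eq_sum σ R n)
  rw [map_mul, map_natCast, map_mul, map_sum, sum_eq_zero, mul_zero] at newton
  · exact (mul_eq_zero.mp newton).resolve_left hn
  · intro a ha
    rw [mem_filter, HasAntidiagonal.mem_antidiagonal] at ha
    rw [map_mul, h a.2 (by omega) (by omega), mul_zero]

theorem Finset.sum_strictMono_prod_eq_sum_powersetCard {α M : Type*} [Fintype α] [LinearOrder α]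
    [CommSemiring M] (f : α → M) (r : ℕ) :
    ∑ m ∈ univ.filter (StrictMono : (Fin r → α) → Prop), ∏ s, f (m s) =
      ∑ A ∈ powersetCard r univ, ∏ i ∈ A, f i := by
  refine sum_bij' (fun m _ => univ.image m)
    (fun A hA => A.orderEmbOfFin (mem_powersetCard_univ.mp hA)) ?_ ?_ ?_ ?_ ?_
  · intro m hm
    rw [mem_filter] at hm
    rw [mem_powersetCard_univ, card_image_of_injective _ hm.2.injective, card_univ,
      Fintype.card_fin]
  · intro A hA
    simp only [mem_filter, mem_univ, true_and]
    exact (A.orderEmbOfFin _).strictMono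
  · intro m hm
    rw [mem_filter] at hm
    exact (orderEmbOfFin_unique _ (fun s => mem_image_of_mem m (mem_univ s)) hm.2).symm
  · intro A hA
    exact image_orderEmbOfFin_univ A _
  · intro m hm
    rw [mem_filter] at hm
    rw [prod_image fun s _ t _ h => hm.2.injective h]

theorem Finset.sum_strictAnti_prod_eq_sum_powersetCard {α M : Type*} [Fintype α] [LinearOrder α]
    [CommSemiring M] (f : α → M) (r : ℕ) :
    ∑ m ∈ univ.filter (StrictAnti : (Fin r → α) → Prop), ∏ s, f (m s) =
      ∑ A ∈ powersetCard r univ, ∏ i ∈ A, f i :=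
  sum_strictMono_prod_eq_sum_powersetCard (α := αᵒᵈ) f r

theorem finite_mzv_constant_vanishing (p k r : ℕ) (hp : p.Prime) (hk : 1 ≤ k)
    (hr : 1 ≤ r) (hkr : k * r ≤ p - 2) :
    (∑ m ∈ Finset.univ.filter
        (fun m : Fin r → Fin p =>
          (∀ s t : Fin r, s < t → (m t : ℕ) < (m s : ℕ)) ∧ ∀ s, 1 ≤ (m s : ℕ)),
      ∏ s, (((m s : ℕ) : ZMod p))⁻¹ ^ k) = 0 := by
  have : Fact p.Prime := ⟨hp⟩
  have hp2 := hp.two_le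
  set x : Fin p → ZMod p := fun i => ((i : ℕ) : ZMod p)⁻¹ ^ k
  -- `0⁻¹ = 0`, so tuples with an entry `0` contribute nothing
  have hx0 : ∀ i, x i ≠ 0 → 1 ≤ (i : ℕ) := fun i hi => by
    by_contra! h
    simp [x, Nat.lt_one_iff.mp h, zero_pow (by omega : k ≠ 0)] at hi
  have hpsum : ∀ j, 0 < j → j ≤ r → eval x (psum (Fin p) (ZMod p) j) = 0 := by
    intro j _ hj
    have hlt : k * j < Fintype.card (ZMod p) - 1 := by
      rw [ZMod.card]; have := Nat.mul_le_mul_left k hj; omega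
    simp only [psum, map_sum, map_pow, eval_X, x, ← pow_mul]
    rw [ZMod.sum_natCast_fin p (· ⁻¹ ^ (k * j)), FiniteField.sum_inv_pow_lt_card_sub_one _ hlt]
  have hrp : r < p := by have := Nat.le_mul_of_pos_left r hk; omega
  have hr0 : (r : ZMod p) ≠ 0 := by
    rw [Ne, ZMod.natCast_eq_zero_iff]
    exact Nat.not_dvd_of_pos_of_lt hr hrp
  calc _ = ∑ m ∈ univ.filter (StrictAnti : (Fin r → Fin p) → Prop), ∏ s, x (m s) := by
        rw [← filter_filter]
        refine sum_filter_of_ne fun m _ hm s => hx0 _ ?_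
        exact (prod_ne_zero_iff.mp hm) s (mem_univ s)
    _ = eval x (esymm (Fin p) (ZMod p) r) := by
        rw [sum_strictAnti_prod_eq_sum_powersetCard]
        simp [esymm]
    _ = 0 := eval_esymm_eq_zero_of_eval_psum_eq_zero x hr0 hpsum
end
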